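/- If $\kappa: (\Omega_1,\mu_1) \to \Omega_2$ is a statistic sufficient for the parameter $x \in M$ of a 3-integrable parametrized measure model $(M,\Omega_1,\mu_1,p_1)$, then the Amari-Chentsov 3-tensor is preserved: for all $x$ and tangent vectors $V,W,X$, $\int_{\Omega_1} \partial_V \ln\bar p_1 \, \partial_W \ln\bar p_1 \, \partial_X \ln\bar p_1 \, dp_1(x) = \int_{\Omega_2} \partial_V \ln\kappa_*(\bar p_1)\, \partial_W \ln\kappa_*(\bar p_1)\, \partial_X \ln\kappa_*(\bar p_1)\, d\kappa_*(p_1(x))$. -/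

import Mathlib

/-!
Sufficiency makes each likelihood ratio `p₁ y / p₁ x` a function of `κ`, and pushing the
model forward along `κ` shows that the same function is the likelihood ratio `q y / q x`.
Hence `log p₁ y - log p₁ x = log q y ∘ κ - log q x ∘ κ` almost everywhere. Differentiating
along the countably many parameters `x + n⁻¹ • v` shows that the scores of the two models agree
a.e. through `κ`, and the change of variables along `κ` identifies the two 3-tensor integrals.
-/

open MeasureTheory Filter Topology ENNReal

section Pushforward

variable {α β : Type*} [MeasurableSpace α] [MeasurableSpace β] {μ : Measure α} {κ : α → β}

theorem map_withDensity_comp (hκ : Measurable κ) {g : β → ℝ≥0∞} (hg : Measurable g) :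
    (μ.withDensity (g ∘ κ)).map κ = (μ.map κ).withDensity g := by
  ext A hA
  rw [Measure.map_apply hκ hA, withDensity_apply _ (hκ hA), withDensity_apply _ hA,
    setLIntegral_map hA hg hκ, Function.comp_def]

theorem ae_eq_mul_of_map_withDensity_eq (hκ : Measurable κ) {f f' : α → ℝ≥0∞}
    {g h h' : β → ℝ≥0∞} (hf : AEMeasurable f μ) (hg : Measurable g)
    (hh : AEMeasurable h (μ.map κ)) (hh' : AEMeasurable h' (μ.map κ))
    (hf'_fin : ∫⁻ a, f' a ∂μ ≠ ∞) (hf' : f' =ᵐ[μ] (g ∘ κ) * f)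
    (hmap : (μ.withDensity f).map κ = (μ.map κ).withDensity h)
    (hmap' : (μ.withDensity f').map κ = (μ.map κ).withDensity h') :
    h' =ᵐ[μ.map κ] h * g := by
  have hh'_fin : ∫⁻ b, h' b ∂μ.map κ ≠ ∞ := by
    rwa [← setLIntegral_univ, ← withDensity_apply _ MeasurableSet.univ, ← hmap',
      Measure.map_apply hκ MeasurableSet.univ, Set.preimage_univ,
      withDensity_apply _ MeasurableSet.univ, setLIntegral_univ]
  refine (withDensity_eq_iff hh' (hh.mul hg.aemeasurable) hh'_fin).mp ?_
  rw [← hmap', withDensity_congr_ae hf', mul_comm, withDensity_mul₀ hf (hg.comp hκ).aemeasurable,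
    map_withDensity_comp hκ hg, hmap, withDensity_mul₀ hh hg.aemeasurable]

end Pushforward

section Sufficiency

variable {ι α β : Type*} [MeasurableSpace α] [MeasurableSpace β] {μ : Measure α} {κ : α → β}

theorem ae_div_comp_eq_div_of_factorization (hκ : Measurable κ) {p : ι → α → ℝ}
    {q : ι → β → ℝ} (hp : ∀ i a, 0 < p i a) (hq : ∀ i b, 0 < q i b)
    (hp_int : ∀ i, Integrable (p i) μ) (hq_meas : ∀ i, Measurable (q i))
    (hmap : ∀ i, (μ.withDensity fun a => ENNReal.ofReal (p i a)).map κ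
      = (μ.map κ).withDensity fun b => ENNReal.ofReal (q i b))
    {s : ι → β → ℝ} {t : α → ℝ} (hs : ∀ i, AEMeasurable (s i) (μ.map κ))
    (hfac : ∀ i, ∀ᵐ a ∂μ, p i a = s i (κ a) * t a) (i j : ι) :
    ∀ᵐ a ∂μ, q i (κ a) / q j (κ a) = p i a / p j a := by
  have hs_comp : ∀ k, ∀ᵐ a ∂μ, s k (κ a) = (hs k).mk _ (κ a) :=
    fun k => ae_of_ae_map hκ.aemeasurable (hs k).ae_eq_mk
  set g : β → ℝ := fun b => (hs i).mk _ b / (hs j).mk _ b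
  have hg : Measurable g := (hs i).measurable_mk.div (hs j).measurable_mk
  have hg_ratio : ∀ᵐ a ∂μ, g (κ a) = p i a / p j a := by
    filter_upwards [hfac i, hfac j, hs_comp i, hs_comp j] with a hi hj hsi hsj
    have ht : t a ≠ 0 := right_ne_zero_of_mul (hj ▸ (hp j a).ne')
    rw [hi, hj, mul_div_mul_right _ _ ht, hsi, hsj]
  have hp_ratio : (fun a => ENNReal.ofReal (p i a))
      =ᵐ[μ] ((fun b => ENNReal.ofReal (g b)) ∘ κ) * fun a => ENNReal.ofReal (p j a) := by
    filter_upwards [hg_ratio] with a hga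
    simp only [Pi.mul_apply, Function.comp_apply, hga]
    rw [← ENNReal.ofReal_mul (div_pos (hp i a) (hp j a)).le, div_mul_cancel₀ _ (hp j a).ne']
  have hq_ratio := ae_of_ae_map hκ.aemeasurable <| ae_eq_mul_of_map_withDensity_eq hκ
    (hp_int j).aemeasurable.ennreal_ofReal hg.ennreal_ofReal
    (hq_meas j).ennreal_ofReal.aemeasurable (hq_meas i).ennreal_ofReal.aemeasurable
    (hp_int i).lintegral_lt_top.ne hp_ratio (hmap j) (hmap i)
  filter_upwards [hq_ratio, hg_ratio] with a ha hga
  simp only [Pi.mul_apply, hga] at ha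
  rw [← ENNReal.ofReal_mul (hq j (κ a)).le,
    ENNReal.ofReal_eq_ofReal_iff (hq i (κ a)).le
    (mul_pos (hq j (κ a)) (div_pos (hp i a) (hp j a))).le] at ha
  rw [ha, mul_div_cancel_left₀ _ (hq j (κ a)).ne']

end Sufficiency

section Scores

variable {E F : Type*} [NormedAddCommGroup E] [NormedSpace ℝ E]
  [NormedAddCommGroup F] [NormedSpace ℝ F] {x : E}

theorem DifferentiableAt.tendsto_slope_fderiv_apply {ι : Type*} {l : Filter ι} {f : E → F}
    (hf : DifferentiableAt ℝ f x) (v : E) {τ : ι → ℝ} (hτ : Tendsto τ l (𝓝[≠] 0)) :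
    Tendsto (fun n => (τ n)⁻¹ • (f (x + τ n • v) - f x)) l (𝓝 (fderiv ℝ f x v)) := by
  have := ((hf.hasFDerivAt.hasLineDerivAt v).tendsto_slope_zero).comp hτ
  simpa only [Function.comp_def, zero_add, zero_smul, add_zero] using this

theorem tendsto_natCast_inv_nhdsNE_zero : Tendsto (fun n : ℕ => (n : ℝ)⁻¹) atTop (𝓝[≠] 0) :=
  (tendsto_inv_atTop_nhdsGT_zero.comp tendsto_natCast_atTop_atTop).mono_right
    (nhdsGT_le_nhdsNE 0)

theorem fderiv_apply_eq_of_sub_eq {f g : E → F} (hf : DifferentiableAt ℝ f x)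
    (hg : DifferentiableAt ℝ g x) (v : E)
    (h : ∀ n : ℕ, f (x + (n : ℝ)⁻¹ • v) - f x = g (x + (n : ℝ)⁻¹ • v) - g x) :
    fderiv ℝ f x v = fderiv ℝ g x v := by
  refine tendsto_nhds_unique ?_ (hg.tendsto_slope_fderiv_apply v tendsto_natCast_inv_nhdsNE_zero)
  simpa only [h] using hf.tendsto_slope_fderiv_apply v tendsto_natCast_inv_nhdsNE_zero

theorem measurable_fderiv_apply_of_measurable {β : Type*} [MeasurableSpace β] {f : E → β → ℝ}
    (hf : ∀ y, Measurable (f y)) (hdiff : ∀ b, DifferentiableAt ℝ (fun y => f y b) x) (v : E) :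
    Measurable fun b => fderiv ℝ (fun y => f y b) x v :=
  measurable_of_tendsto_metrizable
    (f := fun (n : ℕ) b => ((n : ℝ)⁻¹)⁻¹ • (f (x + (n : ℝ)⁻¹ • v) b - f x b))
    (fun n => ((hf _).sub (hf x)).const_smul ((n : ℝ)⁻¹)⁻¹)
    (tendsto_pi_nhds.mpr fun b => (hdiff b).tendsto_slope_fderiv_apply v
      tendsto_natCast_inv_nhdsNE_zero)

theorem ae_fderiv_apply_eq_of_ae_sub_eq {α : Type*} [MeasurableSpace α] {μ : Measure α}
    {f g : E → α → ℝ} (hf : ∀ a, DifferentiableAt ℝ (fun y => f y a) x)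
    (hg : ∀ a, DifferentiableAt ℝ (fun y => g y a) x)
    (h : ∀ y, ∀ᵐ a ∂μ, f y a - f x a = g y a - g x a) (v : E) :
    ∀ᵐ a ∂μ, fderiv ℝ (fun y => f y a) x v = fderiv ℝ (fun y => g y a) x v := by
  filter_upwards [ae_all_iff.mpr fun n : ℕ => h (x + (n : ℝ)⁻¹ • v)] with a ha
  exact fderiv_apply_eq_of_sub_eq (hf a) (hg a) v ha

end Scores

theorem stmt_8_general {E Ω₁ Ω₂ : Type*} [NormedAddCommGroup E] [NormedSpace ℝ E]
    [MeasurableSpace Ω₁] [MeasurableSpace Ω₂]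
    (μ₁ : Measure Ω₁)
    (κ : Ω₁ → Ω₂) (hκ : Measurable κ)
    (p₁ : E → Ω₁ → ℝ) (hp₁pos : ∀ x ω, 0 < p₁ x ω)
    (hp₁int : ∀ x, Integrable (p₁ x) μ₁)
    -- `q x` is the density of the transformed model: `κ_*(p̄₁)(x,·) = d(κ_*p₁(x))/d(κ_*μ₁)`
    (q : E → Ω₂ → ℝ) (hqpos : ∀ x ω₂, 0 < q x ω₂) (hqmeas : ∀ x, Measurable (q x))
    (hq : ∀ x, Measure.map κ (μ₁.withDensity (fun ω => ENNReal.ofReal (p₁ x ω)))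
        = (Measure.map κ μ₁).withDensity (fun ω₂ => ENNReal.ofReal (q x ω₂)))
    -- differentiability of the log-likelihoods in the parameter
    (hdiff : ∀ ω x, DifferentiableAt ℝ (fun y => Real.log (p₁ y ω)) x)
    (hdiff' : ∀ ω₂ x, DifferentiableAt ℝ (fun y => Real.log (q y ω₂)) x)
    -- sufficiency of `κ`: Fisher–Neyman factorization of the densities
    (hsuff : ∃ (s : E → Ω₂ → ℝ) (t : Ω₁ → ℝ),
        (∀ x, Integrable (s x) (Measure.map κ μ₁)) ∧ Integrable t μ₁ ∧
        ∀ x, ∀ᵐ ω ∂μ₁, p₁ x ω = s x (κ ω) * t ω) :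
    ∀ x (V W X : E),
      ∫ ω, (fderiv ℝ (fun y => Real.log (p₁ y ω)) x V)
          * (fderiv ℝ (fun y => Real.log (p₁ y ω)) x W)
          * (fderiv ℝ (fun y => Real.log (p₁ y ω)) x X)
          ∂(μ₁.withDensity (fun ω => ENNReal.ofReal (p₁ x ω)))
        = ∫ ω₂, (fderiv ℝ (fun y => Real.log (q y ω₂)) x V)
          * (fderiv ℝ (fun y => Real.log (q y ω₂)) x W)
          * (fderiv ℝ (fun y => Real.log (q y ω₂)) x X)
          ∂((Measure.map κ μ₁).withDensity (fun ω₂ => ENNReal.ofReal (q x ω₂))) := by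
  intro x V W X
  obtain ⟨s, t, hs, -, hfac⟩ := hsuff
  have hlog : ∀ y, ∀ᵐ ω ∂μ₁, Real.log (p₁ y ω) - Real.log (p₁ x ω)
      = Real.log (q y (κ ω)) - Real.log (q x (κ ω)) := fun y =>
    (ae_div_comp_eq_div_of_factorization hκ hp₁pos hqpos hp₁int hqmeas hq
      (fun y => (hs y).aemeasurable) hfac y x).mono fun ω h => by
        rw [← Real.log_div (hp₁pos y ω).ne' (hp₁pos x ω).ne',
          ← Real.log_div (hqpos y (κ ω)).ne' (hqpos x (κ ω)).ne', h]
  have hscore := ae_fderiv_apply_eq_of_ae_sub_eq (fun ω => hdiff ω x)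
    (fun ω => hdiff' (κ ω) x) hlog
  have hscore_meas := measurable_fderiv_apply_of_measurable (fun y => (hqmeas y).log)
    (fun ω₂ => hdiff' ω₂ x)
  have hac : μ₁.withDensity (fun ω => ENNReal.ofReal (p₁ x ω)) ≪ μ₁ :=
    withDensity_absolutelyContinuous _ _
  rw [← hq x, integral_map hκ.aemeasurable
    (((hscore_meas V).fun_mul (hscore_meas W)).fun_mul (hscore_meas X)).aestronglyMeasurable]
  refine integral_congr_ae ?_
  filter_upwards [hac.ae_le (hscore V), hac.ae_le (hscore W), hac.ae_le (hscore X)]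
    with ω hV hW hX
  rw [hV, hW, hX]

/-- Invariance of the Amari–Chentsov 3-tensor under a sufficient statistic: if `κ` is
sufficient for the parameter of a 3-integrable parametrized measure model
`(M, Ω₁, μ₁, p₁)`, then for all `x` and tangent vectors `V, W, X`,
`∫_{Ω₁} ∂_V ln p̄₁ ∂_W ln p̄₁ ∂_X ln p̄₁ dp₁(x)
  = ∫_{Ω₂} ∂_V ln κ_*(p̄₁) ∂_W ln κ_*(p̄₁) ∂_X ln κ_*(p̄₁) dκ_*(p₁(x))`. -/
theorem stmt_8 {E Ω₁ Ω₂ : Type*} [NormedAddCommGroup E] [NormedSpace ℝ E]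
    [MeasurableSpace Ω₁] [MeasurableSpace Ω₂]
    (μ₁ : Measure Ω₁) [IsFiniteMeasure μ₁]
    (κ : Ω₁ → Ω₂) (hκ : Measurable κ)
    (p₁ : E → Ω₁ → ℝ) (hp₁pos : ∀ x ω, 0 < p₁ x ω)
    (hp₁meas : ∀ x, Measurable (p₁ x)) (hp₁int : ∀ x, Integrable (p₁ x) μ₁)
    -- `q x` is the density of the transformed model: `κ_*(p̄₁)(x,·) = d(κ_*p₁(x))/d(κ_*μ₁)`
    (q : E → Ω₂ → ℝ) (hqpos : ∀ x ω₂, 0 < q x ω₂) (hqmeas : ∀ x, Measurable (q x))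
    (hq : ∀ x, Measure.map κ (μ₁.withDensity (fun ω => ENNReal.ofReal (p₁ x ω)))
        = (Measure.map κ μ₁).withDensity (fun ω₂ => ENNReal.ofReal (q x ω₂)))
    -- differentiability of the log-likelihoods in the parameter
    (hdiff : ∀ ω x, DifferentiableAt ℝ (fun y => Real.log (p₁ y ω)) x)
    (hdiff' : ∀ ω₂ x, DifferentiableAt ℝ (fun y => Real.log (q y ω₂)) x)
    -- 3-integrability of the scores
    (hL3 : ∀ x (V : E), MemLp (fun ω => fderiv ℝ (fun y => Real.log (p₁ y ω)) x V) 3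
        (μ₁.withDensity (fun ω => ENNReal.ofReal (p₁ x ω))))
    (hL3' : ∀ x (V : E), MemLp (fun ω₂ => fderiv ℝ (fun y => Real.log (q y ω₂)) x V) 3
        ((Measure.map κ μ₁).withDensity (fun ω₂ => ENNReal.ofReal (q x ω₂))))
    -- sufficiency of `κ`: Fisher–Neyman factorization of the densities
    (hsuff : ∃ (s : E → Ω₂ → ℝ) (t : Ω₁ → ℝ),
        (∀ x, Integrable (s x) (Measure.map κ μ₁)) ∧ Integrable t μ₁ ∧
        ∀ x, ∀ᵐ ω ∂μ₁, p₁ x ω = s x (κ ω) * t ω) :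
    ∀ x (V W X : E),
      ∫ ω, (fderiv ℝ (fun y => Real.log (p₁ y ω)) x V)
          * (fderiv ℝ (fun y => Real.log (p₁ y ω)) x W)
          * (fderiv ℝ (fun y => Real.log (p₁ y ω)) x X)
          ∂(μ₁.withDensity (fun ω => ENNReal.ofReal (p₁ x ω)))
        = ∫ ω₂, (fderiv ℝ (fun y => Real.log (q y ω₂)) x V)
          * (fderiv ℝ (fun y => Real.log (q y ω₂)) x W)
          * (fderiv ℝ (fun y => Real.log (q y ω₂)) x X)
          ∂((Measure.map κ μ₁).withDensity (fun ω₂ => ENNReal.ofReal (q x ω₂))) :=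
  stmt_8_general μ₁ κ hκ p₁ hp₁pos hp₁int q hqpos hqmeas hq hdiff hdiff' hsuff
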